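/- arXiv:1408.1222 — 8 statements merged into one kernel-verified Lean document; each statement's English description precedes it below -/
import Mathlib

section
/- Let T > 0, let n_c ≥ 1 be an integer, let α_max ∈ (0,1), and set a = α_max/(T(1 − α_max)). Let ν_1, …, ν_N be nonnegative reals with S = Σ_{j=1}^N ν_j. If S < min{ a / (Σ_{k=0}^{n_c−1} α_max^k), 1 / (T · Σ_{k=1}^{n_c−1} k·α_max^{k−1}) }, then the system of equations x_i = Σ_{j≠i} ν_j · Σ_{k=0}^{n_c−1} (T x_j/(1 + T x_j))^k, for i = 1, …, N, has a unique solution x ∈ [0,a]^N. -/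
/-!
The right-hand side of the system is a self-map `F` of the box `[0, a]^N`. Since
`α(x) = T x / (1 + T x)` is `T`-Lipschitz and increasing with `α(a) = α_max`, each factor
`∑_{k<n_c} α(x_j)^k` lies in `[0, ∑_k α_max^k]` and is Lipschitz with constant
`T ∑_k k α_max^(k-1)` on `[0, a]`. Hence `F` maps the box into `[0, S ∑_k α_max^k] ⊆ [0, a]^N`
and is a contraction for the sup distance with constant `S T ∑_k k α_max^(k-1) < 1`, so
Banach's fixed point theorem gives exactly one solution in the box.
-/

open Finset Function

theorem existsUnique_isFixedPt_of_dist_le_mul {X : Type*} [MetricSpace X] {s : Set X}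
    (hsc : IsComplete s) (hs : s.Nonempty) {f : X → X} (hsf : Set.MapsTo f s s) {K : ℝ}
    (hK : K < 1) (hf : ∀ x ∈ s, ∀ y ∈ s, dist (f x) (f y) ≤ K * dist x y) :
    ∃! x, x ∈ s ∧ IsFixedPt f x := by
  obtain ⟨x₀, hx₀⟩ := hs
  have hcon : ContractingWith K.toNNReal (hsf.restrict f s s) := by
    refine ⟨Real.toNNReal_lt_one.mpr hK, LipschitzWith.of_dist_le_mul fun x y => ?_⟩
    exact (hf x x.2 y y.2).trans
      (mul_le_mul_of_nonneg_right (Real.le_coe_toNNReal K) dist_nonneg)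
  obtain ⟨y, hys, hfy, -⟩ := hcon.exists_fixedPoint' hsc hsf hx₀ (edist_ne_top _ _)
  refine ⟨y, ⟨hys, hfy⟩, fun z ⟨hzs, hfz⟩ => ?_⟩
  exact congrArg Subtype.val
    (hcon.fixedPoint_unique' (x := ⟨z, hzs⟩) (y := ⟨y, hys⟩) (Subtype.ext hfz) (Subtype.ext hfy))

theorem abs_sum_range_pow_sub_le {u v c : ℝ} (hu : |u| ≤ c) (hv : |v| ≤ c) (n : ℕ) :
    |∑ k ∈ range n, u ^ k - ∑ k ∈ range n, v ^ k| ≤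
      (∑ k ∈ range n, (k : ℝ) * c ^ (k - 1)) * |u - v| := by
  rw [← sum_sub_distrib, sum_mul]
  refine (abs_sum_le_sum_abs _ _).trans (sum_le_sum fun k _ => ?_)
  have hmax : max |u| |v| ^ (k - 1) ≤ c ^ (k - 1) :=
    pow_le_pow_left₀ (le_max_of_le_left (abs_nonneg u)) (max_le hu hv) _
  calc |u ^ k - v ^ k| ≤ |u - v| * k * max |u| |v| ^ (k - 1) := abs_pow_sub_pow_le u v k
    _ ≤ |u - v| * k * c ^ (k - 1) := by gcongr
    _ = k * c ^ (k - 1) * |u - v| := by ring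

noncomputable def ccaFailureProb (T x : ℝ) : ℝ := T * x / (1 + T * x)

noncomputable def expectedAttempts (T : ℝ) (nc : ℕ) (x : ℝ) : ℝ :=
  ∑ k ∈ range nc, ccaFailureProb T x ^ k

def perceivedRate {ι : Type*} [Fintype ι] [DecidableEq ι] (g : ℝ → ℝ) (ν x : ι → ℝ) (i : ι) :
    ℝ :=
  ∑ j ∈ univ.erase i, ν j * g (x j)

section ccaFailureProb

variable {T x y α : ℝ}

theorem ccaFailureProb_nonneg (hT : 0 ≤ T) (hx : 0 ≤ x) : 0 ≤ ccaFailureProb T x := by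
  unfold ccaFailureProb
  positivity

theorem ccaFailureProb_le (hT : 0 < T) (hα : α < 1) (hx : 0 ≤ x)
    (hxa : x ≤ α / (T * (1 - α))) : ccaFailureProb T x ≤ α := by
  have hxa' : x * (T * (1 - α)) ≤ α := (le_div_iff₀ (by nlinarith)).mp hxa
  unfold ccaFailureProb
  rw [div_le_iff₀ (by positivity)]
  linarith

theorem abs_ccaFailureProb_sub_le (hT : 0 ≤ T) (hx : 0 ≤ x) (hy : 0 ≤ y) :
    |ccaFailureProb T x - ccaFailureProb T y| ≤ T * |x - y| := by
  have hx' : 0 < 1 + T * x := by positivity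
  have hy' : 0 < 1 + T * y := by positivity
  have hdiff : ccaFailureProb T x - ccaFailureProb T y =
      T * (x - y) / ((1 + T * x) * (1 + T * y)) := by
    unfold ccaFailureProb
    field_simp
    ring
  rw [hdiff, abs_div, abs_mul, abs_of_nonneg hT, abs_of_pos (mul_pos hx' hy')]
  exact div_le_self (by positivity) (by nlinarith [mul_nonneg hT hx, mul_nonneg hT hy])

end ccaFailureProb

section expectedAttempts

variable {T α : ℝ} (nc : ℕ)

theorem expectedAttempts_mem_Icc (hT : 0 < T) (hα : α < 1) {x : ℝ}
    (hx : x ∈ Set.Icc 0 (α / (T * (1 - α)))) :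
    expectedAttempts T nc x ∈ Set.Icc 0 (∑ k ∈ range nc, α ^ k) := by
  have h0 := ccaFailureProb_nonneg hT.le hx.1
  have hle := ccaFailureProb_le hT hα hx.1 hx.2
  exact ⟨sum_nonneg fun k _ => pow_nonneg h0 k,
    sum_le_sum fun k _ => pow_le_pow_left₀ h0 hle k⟩

theorem abs_expectedAttempts_sub_le (hT : 0 < T) (hα : α < 1) {x y : ℝ}
    (hx : x ∈ Set.Icc 0 (α / (T * (1 - α)))) (hy : y ∈ Set.Icc 0 (α / (T * (1 - α)))) :
    |expectedAttempts T nc x - expectedAttempts T nc y| ≤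
      T * (∑ k ∈ range nc, (k : ℝ) * α ^ (k - 1)) * |x - y| := by
  have bound {t : ℝ} (ht : t ∈ Set.Icc 0 (α / (T * (1 - α)))) : |ccaFailureProb T t| ≤ α := by
    rw [abs_of_nonneg (ccaFailureProb_nonneg hT.le ht.1)]
    exact ccaFailureProb_le hT hα ht.1 ht.2
  have hα0 : 0 ≤ α := (abs_nonneg _).trans (bound hx)
  have hC : 0 ≤ ∑ k ∈ range nc, (k : ℝ) * α ^ (k - 1) :=
    sum_nonneg fun k _ => mul_nonneg k.cast_nonneg (pow_nonneg hα0 _)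
  calc |expectedAttempts T nc x - expectedAttempts T nc y|
      ≤ (∑ k ∈ range nc, (k : ℝ) * α ^ (k - 1)) * |ccaFailureProb T x - ccaFailureProb T y| :=
        abs_sum_range_pow_sub_le (bound hx) (bound hy) nc
    _ ≤ (∑ k ∈ range nc, (k : ℝ) * α ^ (k - 1)) * (T * |x - y|) := by
        gcongr
        exact abs_ccaFailureProb_sub_le hT.le hx.1 hy.1
    _ = T * (∑ k ∈ range nc, (k : ℝ) * α ^ (k - 1)) * |x - y| := by ring

end expectedAttempts

section perceivedRate

variable {ι : Type*} [Fintype ι] [DecidableEq ι] {g : ℝ → ℝ} {ν : ι → ℝ}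

theorem sum_erase_le_sum (hν : ∀ j, 0 ≤ ν j) (i : ι) : ∑ j ∈ univ.erase i, ν j ≤ ∑ j, ν j :=
  sum_le_sum_of_subset_of_nonneg (erase_subset _ _) fun j _ _ => hν j

theorem perceivedRate_mem_Icc (hν : ∀ j, 0 ≤ ν j) {M : ℝ} {x : ι → ℝ}
    (hg : ∀ j, g (x j) ∈ Set.Icc 0 M) (i : ι) :
    perceivedRate g ν x i ∈ Set.Icc 0 ((∑ j, ν j) * M) := by
  refine ⟨sum_nonneg fun j _ => mul_nonneg (hν j) (hg j).1, ?_⟩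
  calc perceivedRate g ν x i ≤ ∑ j ∈ univ.erase i, ν j * M :=
        sum_le_sum fun j _ => mul_le_mul_of_nonneg_left (hg j).2 (hν j)
    _ = (∑ j ∈ univ.erase i, ν j) * M := (sum_mul _ _ _).symm
    _ ≤ (∑ j, ν j) * M :=
        mul_le_mul_of_nonneg_right (sum_erase_le_sum hν i) ((hg i).1.trans (hg i).2)

theorem dist_perceivedRate_le (hν : ∀ j, 0 ≤ ν j) {D : Set ℝ} {L : ℝ} (hL : 0 ≤ L)
    (hg : ∀ s ∈ D, ∀ t ∈ D, |g s - g t| ≤ L * |s - t|) {x y : ι → ℝ}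
    (hx : ∀ j, x j ∈ D) (hy : ∀ j, y j ∈ D) :
    dist (perceivedRate g ν x) (perceivedRate g ν y) ≤ (∑ j, ν j) * L * dist x y := by
  have hS : 0 ≤ ∑ j, ν j := sum_nonneg fun j _ => hν j
  refine (dist_pi_le_iff (by positivity)).mpr fun i => ?_
  have hcoord (j : ι) : ν j * |g (x j) - g (y j)| ≤ ν j * (L * dist x y) := by
    refine mul_le_mul_of_nonneg_left ((hg _ (hx j) _ (hy j)).trans ?_) (hν j)
    exact mul_le_mul_of_nonneg_left (dist_le_pi_dist x y j) hL
  calc dist (perceivedRate g ν x i) (perceivedRate g ν y i)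
      = |∑ j ∈ univ.erase i, ν j * (g (x j) - g (y j))| := by
        simp only [Real.dist_eq, perceivedRate, ← sum_sub_distrib, mul_sub]
    _ ≤ ∑ j ∈ univ.erase i, ν j * (L * dist x y) := by
        refine (abs_sum_le_sum_abs _ _).trans (sum_le_sum fun j _ => ?_)
        rw [abs_mul, abs_of_nonneg (hν j)]
        exact hcoord j
    _ = (∑ j ∈ univ.erase i, ν j) * (L * dist x y) := (sum_mul _ _ _).symm
    _ ≤ (∑ j, ν j) * L * dist x y := by
        rw [mul_assoc]
        exact mul_le_mul_of_nonneg_right (sum_erase_le_sum hν i) (by positivity)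

end perceivedRate

/-- Uniqueness of the simplified vector fixed point. With
`a = α_max/(T(1−α_max))`, if the total load `S = ∑_j ν_j` satisfies
`S < min{ a/∑_{k<n_c} α_max^k , 1/(T ∑_{k<n_c} k α_max^{k−1}) }`, then the system
`x_i = ∑_{j≠i} ν_j ∑_{k<n_c} (T x_j/(1+T x_j))^k` has a unique solution in `[0,a]^N`. -/
theorem stmt2 (T : ℝ) (hT : 0 < T) (nc : ℕ) (hnc : 1 ≤ nc)
    (αmax : ℝ) (hαmax : αmax ∈ Set.Ioo (0 : ℝ) 1)
    (a : ℝ) (ha : a = αmax / (T * (1 - αmax)))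
    (N : ℕ) (ν : Fin N → ℝ) (hν : ∀ j, 0 ≤ ν j)
    (hS : (∑ j, ν j) <
      min (a / ∑ k ∈ Finset.range nc, αmax ^ k)
          (1 / (T * ∑ k ∈ Finset.range nc, (k : ℝ) * αmax ^ (k - 1)))) :
    ∃! x : Fin N → ℝ, (∀ i, x i ∈ Set.Icc (0 : ℝ) a) ∧
      ∀ i : Fin N, x i = ∑ j ∈ Finset.univ.erase i,
        ν j * ∑ k ∈ Finset.range nc, (T * x j / (1 + T * x j)) ^ k := by
  set F := perceivedRate (expectedAttempts T nc) ν
  set box : Set (Fin N → ℝ) := Set.univ.pi fun _ => Set.Icc 0 a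
  have hS0 : 0 ≤ ∑ j, ν j := sum_nonneg fun j _ => hν j
  have hC1 : 0 < ∑ k ∈ range nc, αmax ^ k :=
    zero_lt_one.trans_le (single_le_sum (f := (αmax ^ ·)) (fun k _ => pow_nonneg hαmax.1.le k)
      (mem_range.mpr hnc))
  have hSC1 : (∑ j, ν j) * ∑ k ∈ range nc, αmax ^ k ≤ a :=
    ((lt_div_iff₀ hC1).mp (hS.trans_le (min_le_left _ _))).le
  have hTC2 : 0 < T * ∑ k ∈ range nc, (k : ℝ) * αmax ^ (k - 1) :=
    one_div_pos.mp (hS0.trans_lt (hS.trans_le (min_le_right _ _)))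
  have hSL : (∑ j, ν j) * (T * ∑ k ∈ range nc, (k : ℝ) * αmax ^ (k - 1)) < 1 :=
    (lt_div_iff₀ hTC2).mp (hS.trans_le (min_le_right _ _))
  have ha0 : 0 ≤ a := (mul_nonneg hS0 hC1.le).trans hSC1
  subst ha
  have hmaps : Set.MapsTo F box box := fun x hx i _ =>
    Set.Icc_subset_Icc_right hSC1 <| perceivedRate_mem_Icc hν
      (fun j => expectedAttempts_mem_Icc nc hT hαmax.2 (hx j trivial)) i
  have hfix := existsUnique_isFixedPt_of_dist_le_mul
    (isClosed_set_pi fun _ _ => isClosed_Icc).isComplete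
    ⟨0, fun _ _ => ⟨le_rfl, ha0⟩⟩ hmaps hSL
    fun x hx y hy => (dist_perceivedRate_le hν hTC2.le
      (fun _ hs _ ht => abs_expectedAttempts_sub_le nc hT hαmax.2 hs ht)
      (fun j => hx j trivial) (fun j => hy j trivial)).trans_eq (by ring)
  refine (existsUnique_congr fun x => and_congr Set.mem_univ_pi ?_).mp hfix
  exact funext_iff.trans (forall_congr' fun i => eq_comm)
end

section
/- Let n_c, n_t ≥ 1 be integers and define, for α, γ ∈ [0,1], the packet discard probability δ(α,γ) = α^{n_c} · Σ_{k=0}^{n_t−1} r^k + r^{n_t}, where r = γ(1 − α^{n_c}). If α_1 ≤ α_2 and γ_1 ≤ γ_2 with α_2^{n_c} ≤ 1/n_t and γ_2^{n_t} ≤ 1/n_t (and α_1, γ_1 ∈ [0,1]), then δ(α_1, γ_1) ≤ δ(α_2, γ_2); that is, δ is monotonically increasing in α and γ in this regime. -/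
/-- Identity: `a·∑_{k<n} r^k + r^n = 1 - (1-γ)(1-a)·∑_{k<n} r^k` for `r = γ(1-a)`. -/
lemma delta_eq (n : ℕ) (a γ : ℝ) :
    a * (∑ k ∈ Finset.range n, (γ * (1 - a)) ^ k) + (γ * (1 - a)) ^ n
      = 1 - (1 - γ) * (1 - a) * (∑ k ∈ Finset.range n, (γ * (1 - a)) ^ k) := by
  linear_combination (-1 : ℝ) * geom_sum_mul (γ * (1 - a)) n

/-- Monotonicity in `a`. -/
lemma mono_a (n : ℕ) (a₁ a₂ γ : ℝ) (ha₁ : 0 ≤ a₁) (ha : a₁ ≤ a₂) (ha₂ : a₂ ≤ 1)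
    (hγ0 : 0 ≤ γ) (hγ1 : γ ≤ 1) :
    a₁ * (∑ k ∈ Finset.range n, (γ * (1 - a₁)) ^ k) + (γ * (1 - a₁)) ^ n
      ≤ a₂ * (∑ k ∈ Finset.range n, (γ * (1 - a₂)) ^ k) + (γ * (1 - a₂)) ^ n := by
  rw [delta_eq, delta_eq]
  have h1 : (0:ℝ) ≤ 1 - γ := by linarith
  have h2 : (0:ℝ) ≤ 1 - a₂ := by linarith
  have h3 : (1:ℝ) - a₂ ≤ 1 - a₁ := by linarith
  have h4 : (0:ℝ) ≤ γ * (1 - a₂) := by positivity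
  have h5 : γ * (1 - a₂) ≤ γ * (1 - a₁) := by nlinarith
  have hsum : (∑ k ∈ Finset.range n, (γ * (1 - a₂)) ^ k)
      ≤ ∑ k ∈ Finset.range n, (γ * (1 - a₁)) ^ k := by
    apply Finset.sum_le_sum
    intro k _
    exact pow_le_pow_left₀ h4 h5 k
  have hsnn : (0:ℝ) ≤ ∑ k ∈ Finset.range n, (γ * (1 - a₂)) ^ k := by
    apply Finset.sum_nonneg
    intro k _
    positivity
  have hr1 : (0:ℝ) ≤ γ * (1 - a₁) := by nlinarith
  have hsnn' : (0:ℝ) ≤ ∑ k ∈ Finset.range n, (γ * (1 - a₁)) ^ k :=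
    Finset.sum_nonneg fun k _ => pow_nonneg hr1 k
  nlinarith [mul_le_mul hsum h3 h2 hsnn']

/-- Monotonicity of the packet discard probability
`δ(α,γ) = α^{n_c} ∑_{k<n_t} r^k + r^{n_t}`, `r = γ(1−α^{n_c})`: if `α₁ ≤ α₂`,
`γ₁ ≤ γ₂` (all in `[0,1]`) with `α₂^{n_c} ≤ 1/n_t` and `γ₂^{n_t} ≤ 1/n_t`,
then `δ(α₁,γ₁) ≤ δ(α₂,γ₂)`. -/
theorem stmt5 (nc nt : ℕ) (hnc : 1 ≤ nc) (hnt : 1 ≤ nt)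
    (α₁ α₂ γ₁ γ₂ : ℝ)
    (hα₁ : α₁ ∈ Set.Icc (0 : ℝ) 1) (hα₂ : α₂ ∈ Set.Icc (0 : ℝ) 1)
    (hγ₁ : γ₁ ∈ Set.Icc (0 : ℝ) 1) (hγ₂ : γ₂ ∈ Set.Icc (0 : ℝ) 1)
    (hα : α₁ ≤ α₂) (hγ : γ₁ ≤ γ₂)
    (hαc : α₂ ^ nc ≤ 1 / (nt : ℝ)) (hγt : γ₂ ^ nt ≤ 1 / (nt : ℝ)) :
    α₁ ^ nc * (∑ k ∈ Finset.range nt, (γ₁ * (1 - α₁ ^ nc)) ^ k) +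
        (γ₁ * (1 - α₁ ^ nc)) ^ nt
      ≤ α₂ ^ nc * (∑ k ∈ Finset.range nt, (γ₂ * (1 - α₂ ^ nc)) ^ k) +
        (γ₂ * (1 - α₂ ^ nc)) ^ nt := by
  obtain ⟨hα₁0, hα₁1⟩ := hα₁
  obtain ⟨hα₂0, hα₂1⟩ := hα₂
  obtain ⟨hγ₁0, hγ₁1⟩ := hγ₁
  obtain ⟨hγ₂0, hγ₂1⟩ := hγ₂
  have ha₁0 : (0:ℝ) ≤ α₁ ^ nc := by positivity
  have ha : α₁ ^ nc ≤ α₂ ^ nc := pow_le_pow_left₀ hα₁0 hα nc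
  have ha₂1 : α₂ ^ nc ≤ 1 := pow_le_one₀ hα₂0 hα₂1
  calc α₁ ^ nc * (∑ k ∈ Finset.range nt, (γ₁ * (1 - α₁ ^ nc)) ^ k) +
        (γ₁ * (1 - α₁ ^ nc)) ^ nt
      ≤ α₂ ^ nc * (∑ k ∈ Finset.range nt, (γ₁ * (1 - α₂ ^ nc)) ^ k) +
        (γ₁ * (1 - α₂ ^ nc)) ^ nt :=
        mono_a nt _ _ γ₁ ha₁0 ha ha₂1 hγ₁0 hγ₁1
    _ ≤ α₂ ^ nc * (∑ k ∈ Finset.range nt, (γ₂ * (1 - α₂ ^ nc)) ^ k) +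
        (γ₂ * (1 - α₂ ^ nc)) ^ nt := by
        have h2 : (0:ℝ) ≤ 1 - α₂ ^ nc := by linarith
        have hr : γ₁ * (1 - α₂ ^ nc) ≤ γ₂ * (1 - α₂ ^ nc) :=
          mul_le_mul_of_nonneg_right hγ h2
        have hr0 : (0:ℝ) ≤ γ₁ * (1 - α₂ ^ nc) := by positivity
        have hsum : (∑ k ∈ Finset.range nt, (γ₁ * (1 - α₂ ^ nc)) ^ k)
            ≤ ∑ k ∈ Finset.range nt, (γ₂ * (1 - α₂ ^ nc)) ^ k :=
          Finset.sum_le_sum fun k _ => pow_le_pow_left₀ hr0 hr k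
        have := pow_le_pow_left₀ hr0 hr nt
        nlinarith [mul_le_mul_of_nonneg_left hsum (le_trans ha₁0 ha)]
end

section
/- Let T > 0, l ∈ [0,1), and integers n_c, n_t ≥ 1. Define α(τ) = Tτ/(1+Tτ), γ(τ) = l + (1−l)(1 − exp(−12τ)), and δ(α,γ) = α^{n_c} Σ_{k=0}^{n_t−1} r^k + r^{n_t} with r = γ(1 − α^{n_c}). Then the composite function τ ↦ δ(α(τ), γ(τ)) is monotonically nondecreasing on the set of τ ≥ 0 for which α(τ)^{n_c} ≤ 1/n_t and γ(τ)^{n_t} ≤ 1/n_t. -/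
/-!
Write `a = α(τ)^{n_c}` and `r = γ(1 - a)`. For `a ∈ [0, 1]`, `δ` is a polynomial in `r` with
nonnegative coefficients, hence nondecreasing in `γ`. For fixed `γ` with `γ^{n_t} ≤ 1/n_t` it is
nondecreasing in `a` on `[0, 1/n_t]`: with `n_t = m + 1` its `a`-derivative is
`1 + ∑_{k<m} γ r^k (1 - (k+2) a) - (m+1) γ r^m`, where the sum is nonnegative because
`(k+2) a ≤ (m+1) a ≤ 1`, and the last term is at most `(m+1) γ^{m+1} ≤ 1` because `r ≤ γ`.
Since `α` and `γ` are nondecreasing in `τ`, the two monotonicities compose.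
-/

open Finset

/-- `δ(α, γ)` of the paper as a function of `a = α^{n_c}`. -/
def discardProb (n : ℕ) (a g : ℝ) : ℝ :=
  a * ∑ k ∈ range n, (g * (1 - a)) ^ k + (g * (1 - a)) ^ n

lemma hasDerivAt_discardProb_left (m : ℕ) (a g : ℝ) :
    HasDerivAt (fun a => discardProb (m + 1) a g)
      (1 + ∑ k ∈ range m, g * (g * (1 - a)) ^ k * (1 - (k + 2) * a)
        - (m + 1) * g * (g * (1 - a)) ^ m) a := by
  have hr : HasDerivAt (fun a : ℝ => g * (1 - a)) (-g) a := by
    simpa using ((hasDerivAt_const a (1 : ℝ)).sub (hasDerivAt_id a)).const_mul g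
  have hsum : HasDerivAt (fun a => ∑ k ∈ range (m + 1), (g * (1 - a)) ^ k)
      (∑ k ∈ range (m + 1), (k : ℝ) * (g * (1 - a)) ^ (k - 1) * -g) a :=
    HasDerivAt.fun_sum fun k _ => hr.pow k
  refine (((hasDerivAt_id a).mul hsum).add (hr.pow (m + 1))).congr_deriv ?_
  have hshift : ∑ k ∈ range m, g * (g * (1 - a)) ^ k * (1 - (k + 2) * a)
      = ∑ k ∈ range m, (g * (1 - a)) ^ (k + 1)
        + a * ∑ k ∈ range m, ((k + 1 : ℕ) : ℝ) * (g * (1 - a)) ^ k * -g := by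
    rw [mul_sum, ← sum_add_distrib]
    refine sum_congr rfl fun k _ => ?_
    push_cast
    ring
  simp only [sum_range_succ' _ m, hshift, id, add_tsub_cancel_right]
  push_cast
  ring

lemma monotoneOn_discardProb_left {n : ℕ} {g : ℝ} (hg0 : 0 ≤ g) (hg : g ^ n ≤ 1 / n) :
    MonotoneOn (fun a => discardProb n a g) (Set.Icc 0 (1 / n)) := by
  obtain ⟨m, rfl⟩ : ∃ m, n = m + 1 :=
    Nat.exists_eq_succ_of_ne_zero (by rintro rfl; norm_num at hg)
  push_cast at hg ⊢
  have hderiv := fun a => hasDerivAt_discardProb_left m a g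
  have hdiff : Differentiable ℝ (fun a => discardProb (m + 1) a g) :=
    fun a => (hderiv a).differentiableAt
  refine monotoneOn_of_deriv_nonneg (convex_Icc _ _) hdiff.continuous.continuousOn
    hdiff.differentiableOn fun a ha => ?_
  rw [interior_Icc] at ha
  obtain ⟨ha0, ha1⟩ := ha
  have hm : (0 : ℝ) < m + 1 := by positivity
  have hscaled : (m + 1) * a ≤ 1 := by rw [lt_div_iff₀ hm] at ha1; linarith
  set r := g * (1 - a)
  have ha1' : a ≤ 1 := by nlinarith
  have hr0 : 0 ≤ r := mul_nonneg hg0 (by linarith)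
  have hrg : r ≤ g := by nlinarith
  have hsum : 0 ≤ ∑ k ∈ range m, g * r ^ k * (1 - (k + 2) * a) := by
    refine sum_nonneg fun k hk => mul_nonneg (by positivity) ?_
    have : (k : ℝ) + 2 ≤ m + 1 := by
      have : k < m := mem_range.mp hk
      exact_mod_cast (by omega : k + 2 ≤ m + 1)
    nlinarith
  have hlast : (m + 1) * g * r ^ m ≤ 1 :=
    calc (m + 1) * g * r ^ m ≤ (m + 1) * g * g ^ m := by gcongr
      _ = (m + 1) * g ^ (m + 1) := by ring
      _ ≤ (m + 1) * (1 / (m + 1)) := by gcongr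
      _ = 1 := by field_simp
  rw [(hderiv a).deriv]
  linarith

lemma discardProb_mono_right (n : ℕ) {a g₁ g₂ : ℝ} (ha0 : 0 ≤ a) (ha1 : a ≤ 1) (hg0 : 0 ≤ g₁)
    (hg : g₁ ≤ g₂) : discardProb n a g₁ ≤ discardProb n a g₂ := by
  have hr0 : 0 ≤ g₁ * (1 - a) := mul_nonneg hg0 (by linarith)
  have hr : g₁ * (1 - a) ≤ g₂ * (1 - a) := by gcongr
  unfold discardProb
  gcongr

lemma monotoneOn_discardProb_comp {n : ℕ} {s : Set ℝ} {a g : ℝ → ℝ}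
    (ha : MonotoneOn a s) (hg : MonotoneOn g s) (ha0 : ∀ τ ∈ s, 0 ≤ a τ)
    (hg0 : ∀ τ ∈ s, 0 ≤ g τ) :
    MonotoneOn (fun τ => discardProb n (a τ) (g τ)) {τ ∈ s | a τ ≤ 1 / n ∧ g τ ^ n ≤ 1 / n} := by
  rintro τ₁ ⟨hτ₁, ha₁, hg₁⟩ τ₂ ⟨hτ₂, ha₂, -⟩ h
  have ha₂_le_one : a τ₂ ≤ 1 := ha₂.trans (by simpa using Nat.cast_inv_le_one n)
  calc discardProb n (a τ₁) (g τ₁)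
      ≤ discardProb n (a τ₂) (g τ₁) :=
        monotoneOn_discardProb_left (hg0 τ₁ hτ₁) hg₁ ⟨ha0 τ₁ hτ₁, ha₁⟩ ⟨ha0 τ₂ hτ₂, ha₂⟩
          (ha hτ₁ hτ₂ h)
    _ ≤ discardProb n (a τ₂) (g τ₂) :=
        discardProb_mono_right n (ha0 τ₂ hτ₂) ha₂_le_one (hg0 τ₁ hτ₁) (hg hτ₁ hτ₂ h)

lemma mul_div_one_add_mul_nonneg {T τ : ℝ} (hT : 0 ≤ T) (hτ : 0 ≤ τ) :
    0 ≤ T * τ / (1 + T * τ) := by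
  have := mul_nonneg hT hτ
  positivity

lemma monotoneOn_mul_div_one_add_mul {T : ℝ} (hT : 0 ≤ T) :
    MonotoneOn (fun τ => T * τ / (1 + T * τ)) (Set.Ici 0) := by
  intro x hx y hy hxy
  have hx' := mul_nonneg hT (Set.mem_Ici.mp hx)
  have hy' := mul_nonneg hT (Set.mem_Ici.mp hy)
  rw [div_le_div_iff₀ (by positivity) (by positivity)]
  nlinarith [mul_le_mul_of_nonneg_left hxy hT]

lemma monotone_add_mul_one_sub_exp {l c : ℝ} (hl : l ≤ 1) (hc : 0 ≤ c) :
    Monotone (fun τ => l + (1 - l) * (1 - Real.exp (-c * τ))) := by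
  intro x y hxy
  have : Real.exp (-c * y) ≤ Real.exp (-c * x) :=
    Real.exp_le_exp.mpr (by nlinarith)
  dsimp only
  nlinarith

lemma add_mul_one_sub_exp_nonneg {l c τ : ℝ} (hl0 : 0 ≤ l) (hl1 : l ≤ 1) (hc : 0 ≤ c)
    (hτ : 0 ≤ τ) : 0 ≤ l + (1 - l) * (1 - Real.exp (-c * τ)) := by
  have : Real.exp (-c * τ) ≤ 1 := Real.exp_le_one_iff.mpr (by nlinarith)
  nlinarith

theorem stmt7_general (T l : ℝ) (hT : 0 < T) (hl : l ∈ Set.Ico (0 : ℝ) 1)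
    (nc nt : ℕ) :
    MonotoneOn
      (fun τ : ℝ =>
        (T * τ / (1 + T * τ)) ^ nc *
            (∑ k ∈ Finset.range nt,
              ((l + (1 - l) * (1 - Real.exp (-12 * τ))) *
                (1 - (T * τ / (1 + T * τ)) ^ nc)) ^ k) +
          ((l + (1 - l) * (1 - Real.exp (-12 * τ))) *
            (1 - (T * τ / (1 + T * τ)) ^ nc)) ^ nt)
      {τ : ℝ | 0 ≤ τ ∧ (T * τ / (1 + T * τ)) ^ nc ≤ 1 / (nt : ℝ) ∧
        (l + (1 - l) * (1 - Real.exp (-12 * τ))) ^ nt ≤ 1 / (nt : ℝ)} := by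
  have hα₀ : ∀ τ ∈ Set.Ici (0 : ℝ), 0 ≤ T * τ / (1 + T * τ) :=
    fun τ hτ => mul_div_one_add_mul_nonneg hT.le hτ
  have hαmono := monotoneOn_mul_div_one_add_mul hT.le
  exact monotoneOn_discardProb_comp (s := Set.Ici 0)
    (fun x hx y hy h => pow_le_pow_left₀ (hα₀ x hx) (hαmono hx hy h) nc)
    ((monotone_add_mul_one_sub_exp (c := 12) hl.2.le (by norm_num)).monotoneOn _)
    (fun τ hτ => pow_nonneg (hα₀ τ hτ) nc)
    (fun τ hτ => add_mul_one_sub_exp_nonneg hl.1 hl.2.le (by norm_num) hτ)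

/-- The composite discard probability `τ ↦ δ(α(τ), γ(τ))`, with
`α(τ) = Tτ/(1+Tτ)`, `γ(τ) = l + (1−l)(1 − e^{−12τ})`,
`δ(α,γ) = α^{n_c} ∑_{k<n_t} r^k + r^{n_t}`, `r = γ(1−α^{n_c})`, is monotonically
nondecreasing on `{τ ≥ 0 : α(τ)^{n_c} ≤ 1/n_t ∧ γ(τ)^{n_t} ≤ 1/n_t}`. -/
theorem stmt7 (T l : ℝ) (hT : 0 < T) (hl : l ∈ Set.Ico (0 : ℝ) 1)
    (nc nt : ℕ) (hnc : 1 ≤ nc) (hnt : 1 ≤ nt) :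
    MonotoneOn
      (fun τ : ℝ =>
        (T * τ / (1 + T * τ)) ^ nc *
            (∑ k ∈ Finset.range nt,
              ((l + (1 - l) * (1 - Real.exp (-12 * τ))) *
                (1 - (T * τ / (1 + T * τ)) ^ nc)) ^ k) +
          ((l + (1 - l) * (1 - Real.exp (-12 * τ))) *
            (1 - (T * τ / (1 + T * τ)) ^ nc)) ^ nt)
      {τ : ℝ | 0 ≤ τ ∧ (T * τ / (1 + T * τ)) ^ nc ≤ 1 / (nt : ℝ) ∧
        (l + (1 - l) * (1 - Real.exp (-12 * τ))) ^ nt ≤ 1 / (nt : ℝ)} :=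
  stmt7_general T l hT hl nc nt
end

section
/- Let T > 0, n_c ≥ 1 an integer, α_max ∈ (0,1), a = α_max/(T(1 − α_max)), and M > 0. If M < min{ a / (Σ_{k=0}^{n_c−1} α_max^k), 1 / (T · Σ_{k=1}^{n_c−1} k·α_max^{k−1}) }, then the scalar fixed point equation x = M · Σ_{k=0}^{n_c−1} (Tx/(1+Tx))^k has a unique solution in [0,a]. -/
/-!
On `[0, a]` the CCA failure probability `α(x) = Tx/(1+Tx)` stays in `[0, α_max]` and is
`T`-Lipschitz, while `p ↦ ∑_{k<n_c} p^k` is `∑_{k<n_c} k α_max^{k-1}`-Lipschitz on `[0, α_max]`.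
Hence the right-hand side `f` of the fixed point equation is Lipschitz on `[0, a]` with constant
`M T ∑_{k<n_c} k α_max^{k-1} < 1`, which gives uniqueness. Existence follows from the
intermediate value theorem, since `f 0 ≥ 0` and `f a = M ∑_{k<n_c} α_max^k < a`.
-/

open Finset Set

theorem existsUnique_mem_Icc_eq_of_lipschitzOnWith {f : ℝ → ℝ} {lo hi : ℝ} {K : NNReal}
    (hf : LipschitzOnWith K f (Icc lo hi)) (hK : K < 1) (hle : lo ≤ hi)
    (hlo : lo ≤ f lo) (hhi : f hi ≤ hi) : ∃! x, x ∈ Icc lo hi ∧ x = f x := by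
  have hroot : (0 : ℝ) ∈ Icc (f hi - hi) (f lo - lo) := ⟨by linarith, by linarith⟩
  obtain ⟨x, hx, hfx⟩ := intermediate_value_Icc' hle (hf.continuousOn.sub continuousOn_id) hroot
  have hfx : f x = x := sub_eq_zero.mp hfx
  refine ⟨x, ⟨hx, hfx.symm⟩, fun y ⟨hy, hfy⟩ => ?_⟩
  have hdist : dist y x ≤ K * dist y x := by
    simpa only [← hfy, hfx] using hf.dist_le_mul y hy x hx
  have hK' : (K : ℝ) < 1 := by exact_mod_cast hK
  exact dist_le_zero.mp (by nlinarith [dist_nonneg (x := y) (y := x)])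

theorem mul_lt_of_lt_div_of_nonneg {a b c : ℝ} (ha : 0 < a) (hc : 0 ≤ c) (h : b < a / c) :
    b * c < a := by
  rcases hc.eq_or_lt with rfl | hc
  · simpa using ha
  · exact (lt_div_iff₀ hc).mp h

theorem abs_sum_pow_sub_sum_pow_le {p q c : ℝ} (hp : |p| ≤ c) (hq : |q| ≤ c) (n : ℕ) :
    |∑ k ∈ range n, p ^ k - ∑ k ∈ range n, q ^ k|
      ≤ (∑ k ∈ range n, (k : ℝ) * c ^ (k - 1)) * |p - q| := by
  rw [← sum_sub_distrib, sum_mul]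
  refine (abs_sum_le_sum_abs _ _).trans (sum_le_sum fun k _ => ?_)
  calc |p ^ k - q ^ k| ≤ |p - q| * k * max |p| |q| ^ (k - 1) := abs_pow_sub_pow_le ..
    _ ≤ |p - q| * k * c ^ (k - 1) := by gcongr; exact max_le hp hq
    _ = k * c ^ (k - 1) * |p - q| := by ring

theorem abs_div_one_add_sub_div_one_add_le {x y : ℝ} (hx : 0 ≤ x) (hy : 0 ≤ y) :
    |x / (1 + x) - y / (1 + y)| ≤ |x - y| := by
  have hxy : x / (1 + x) - y / (1 + y) = (x - y) / ((1 + x) * (1 + y)) := by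
    field_simp
    ring
  rw [hxy, abs_div, abs_of_pos (a := (1 + x) * (1 + y)) (by positivity)]
  exact div_le_self (abs_nonneg _) (by nlinarith)

theorem mul_div_one_add_mul_le {T x c : ℝ} (hT : 0 < T) (hx : 0 ≤ x) (hc : c < 1)
    (hxc : x ≤ c / (T * (1 - c))) : T * x / (1 + T * x) ≤ c := by
  rw [le_div_iff₀ (by nlinarith)] at hxc
  rw [div_le_iff₀ (by positivity)]
  linarith

theorem mul_div_one_add_mul_eq {T c : ℝ} (hT : T ≠ 0) (hc : c ≠ 1) :
    T * (c / (T * (1 - c))) / (1 + T * (c / (T * (1 - c)))) = c := by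
  have hc' : 1 - c ≠ 0 := sub_ne_zero.mpr (Ne.symm hc)
  field_simp
  ring

theorem abs_mul_sum_pow_sub_le {T M c u v : ℝ} (hT : 0 ≤ T) (hM : 0 ≤ M)
    (hu : 0 ≤ u) (hv : 0 ≤ v) (hcu : T * u / (1 + T * u) ≤ c) (hcv : T * v / (1 + T * v) ≤ c)
    (n : ℕ) :
    |M * ∑ k ∈ range n, (T * u / (1 + T * u)) ^ k - M * ∑ k ∈ range n, (T * v / (1 + T * v)) ^ k|
      ≤ M * (T * ∑ k ∈ range n, (k : ℝ) * c ^ (k - 1)) * |u - v| := by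
  have hα : ∀ x, 0 ≤ x → T * x / (1 + T * x) ≤ c → |T * x / (1 + T * x)| ≤ c :=
    fun x hx hcx => by rwa [abs_of_nonneg (by positivity)]
  have hα_sub : |T * u / (1 + T * u) - T * v / (1 + T * v)| ≤ T * |u - v| := by
    calc _ ≤ |T * u - T * v| := abs_div_one_add_sub_div_one_add_le (by positivity) (by positivity)
      _ = T * |u - v| := by rw [← mul_sub, abs_mul, abs_of_nonneg hT]
  have hc : 0 ≤ c := (abs_nonneg _).trans (hα u hu hcu)
  rw [← mul_sub, abs_mul, abs_of_nonneg hM, mul_assoc, mul_assoc]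
  gcongr
  calc _ ≤ (∑ k ∈ range n, (k : ℝ) * c ^ (k - 1)) * |T * u / (1 + T * u) - T * v / (1 + T * v)| :=
        abs_sum_pow_sub_sum_pow_le (hα u hu hcu) (hα v hv hcv) n
    _ ≤ (∑ k ∈ range n, (k : ℝ) * c ^ (k - 1)) * (T * |u - v|) := by gcongr
    _ = T * ((∑ k ∈ range n, (k : ℝ) * c ^ (k - 1)) * |u - v|) := by ring

theorem stmt9_general (T : ℝ) (hT : 0 < T) (nc : ℕ)
    (αmax : ℝ) (hαmax : αmax ∈ Set.Ioo (0 : ℝ) 1)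
    (a : ℝ) (ha : a = αmax / (T * (1 - αmax)))
    (M : ℝ) (hM : 0 < M)
    (hMlt : M < min (a / ∑ k ∈ Finset.range nc, αmax ^ k)
      (1 / (T * ∑ k ∈ Finset.range nc, (k : ℝ) * αmax ^ (k - 1)))) :
    ∃! x : ℝ, x ∈ Set.Icc (0 : ℝ) a ∧
      x = M * ∑ k ∈ Finset.range nc, (T * x / (1 + T * x)) ^ k := by
  obtain ⟨hα0, hα1⟩ := hαmax
  have ha0 : 0 < a := ha ▸ div_pos hα0 (mul_pos hT (by linarith))
  have hα_le : ∀ x ∈ Icc 0 a, T * x / (1 + T * x) ≤ αmax :=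
    fun x hx => mul_div_one_add_mul_le hT hx.1 hα1 (ha ▸ hx.2)
  have hα_a : T * a / (1 + T * a) = αmax := ha ▸ mul_div_one_add_mul_eq hT.ne' hα1.ne
  have hlip := LipschitzOnWith.of_dist_le' (s := Icc 0 a)
    (f := fun x => M * ∑ k ∈ range nc, (T * x / (1 + T * x)) ^ k)
    fun u hu v hv => abs_mul_sum_pow_sub_le hT.le hM.le hu.1 hv.1 (hα_le u hu) (hα_le v hv) nc
  refine existsUnique_mem_Icc_eq_of_lipschitzOnWith hlip ?_ ha0.le (by positivity) ?_
  · exact Real.toNNReal_lt_one.mpr <| mul_lt_of_lt_div_of_nonneg one_pos (by positivity)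
      (hMlt.trans_le (min_le_right _ _))
  · simpa only [hα_a] using
      (mul_lt_of_lt_div_of_nonneg ha0 (by positivity) (hMlt.trans_le (min_le_left _ _))).le

/-- Uniqueness of the scalar fixed point. With
`a = α_max/(T(1−α_max))`, if `0 < M < min{ a/∑_{k<n_c} α_max^k ,
1/(T ∑_{k<n_c} k α_max^{k−1}) }`, then `x = M · ∑_{k<n_c} (Tx/(1+Tx))^k`
has a unique solution in `[0,a]`. -/
theorem stmt9 (T : ℝ) (hT : 0 < T) (nc : ℕ) (hnc : 1 ≤ nc)
    (αmax : ℝ) (hαmax : αmax ∈ Set.Ioo (0 : ℝ) 1)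
    (a : ℝ) (ha : a = αmax / (T * (1 - αmax)))
    (M : ℝ) (hM : 0 < M)
    (hMlt : M < min (a / ∑ k ∈ Finset.range nc, αmax ^ k)
      (1 / (T * ∑ k ∈ Finset.range nc, (k : ℝ) * αmax ^ (k - 1)))) :
    ∃! x : ℝ, x ∈ Set.Icc (0 : ℝ) a ∧
      x = M * ∑ k ∈ Finset.range nc, (T * x / (1 + T * x)) ^ k :=
  stmt9_general T hT nc αmax hαmax a ha M hM hMlt
end

section
/- Let T > 0, n_c ≥ 1 an integer, α_max ∈ (0,1), a = α_max/(T(1 − α_max)), and let ν_1, …, ν_N ≥ 0 with S = Σ_{j=1}^N ν_j satisfying S < min{ a / (Σ_{k=0}^{n_c−1} α_max^k), 1 / (T · Σ_{k=1}^{n_c−1} k·α_max^{k−1}) }. Let (τ̄_{−1}, …, τ̄_{−N}) ∈ [0,a]^N be the unique solution of the vector fixed point equations τ̄_{−i} = Σ_{j≠i} ν_j Σ_{k=0}^{n_c−1} α(τ̄_{−j})^k, and let τ̄ ∈ [0,a] be the unique solution of the scalar fixed point equation τ̄ = S · Σ_{k=0}^{n_c−1} α(τ̄)^k, where α(x) =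 Tx/(1+Tx). Then max_{1≤i≤N} τ̄_{−i} ≤ τ̄. -/
private lemma pow_diff_le_aux (c : ℝ) (hc : 0 ≤ c) (k : ℕ) :
    ∀ x y : ℝ, 0 ≤ y → y ≤ x → x ≤ c →
      x ^ k - y ^ k ≤ (k : ℝ) * c ^ (k - 1) * (x - y) := by
  induction k with
  | zero => intro x y _ _ _; simp
  | succ k ih =>
    intro x y hy hyx hxc
    have h2 : x ^ k - y ^ k ≤ (k : ℝ) * c ^ (k - 1) * (x - y) := ih x y hy hyx hxc
    have hnn : 0 ≤ x ^ k - y ^ k := sub_nonneg.2 (pow_le_pow_left₀ hy hyx k)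
    have h3 : x * (x ^ k - y ^ k) ≤ c * ((k : ℝ) * c ^ (k - 1) * (x - y)) := by
      calc x * (x ^ k - y ^ k) ≤ c * (x ^ k - y ^ k) :=
            mul_le_mul_of_nonneg_right hxc hnn
        _ ≤ c * ((k : ℝ) * c ^ (k - 1) * (x - y)) := mul_le_mul_of_nonneg_left h2 hc
    have h4 : y ^ k * (x - y) ≤ c ^ k * (x - y) :=
      mul_le_mul_of_nonneg_right (pow_le_pow_left₀ hy (hyx.trans hxc) k) (sub_nonneg.2 hyx)
    have h5 : c * ((k : ℝ) * c ^ (k - 1) * (x - y)) = (k : ℝ) * c ^ k * (x - y) := by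
      cases k with
      | zero => simp
      | succ m =>
        rw [Nat.succ_sub_one, pow_succ]
        ring
    have h1 : x ^ (k + 1) - y ^ (k + 1) = x * (x ^ k - y ^ k) + y ^ k * (x - y) := by ring
    have : x ^ (k + 1) - y ^ (k + 1) ≤ (k : ℝ) * c ^ k * (x - y) + c ^ k * (x - y) := by
      rw [h1, ← h5]; linarith
    calc x ^ (k + 1) - y ^ (k + 1) ≤ (k : ℝ) * c ^ k * (x - y) + c ^ k * (x - y) := this
      _ = ((k + 1 : ℕ) : ℝ) * c ^ ((k + 1) - 1) * (x - y) := by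
          push_cast; ring

/-- In the uniqueness regime, each component of the unique vector
fixed point `τ̄_{−i} = ∑_{j≠i} ν_j ∑_{k<n_c} α(τ̄_{−j})^k` is bounded above by the
unique scalar fixed point `τ̄ = S ∑_{k<n_c} α(τ̄)^k`, where `α(x) = Tx/(1+Tx)` and
`S = ∑_j ν_j`. -/
theorem stmt13 (T : ℝ) (hT : 0 < T) (nc : ℕ) (hnc : 1 ≤ nc)
    (αmax : ℝ) (hαmax : αmax ∈ Set.Ioo (0 : ℝ) 1)
    (a : ℝ) (ha : a = αmax / (T * (1 - αmax)))
    (N : ℕ) (ν : Fin N → ℝ) (hν : ∀ j, 0 ≤ ν j)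
    (hS : (∑ j, ν j) <
      min (a / ∑ k ∈ Finset.range nc, αmax ^ k)
          (1 / (T * ∑ k ∈ Finset.range nc, (k : ℝ) * αmax ^ (k - 1))))
    (x : Fin N → ℝ) (hx_mem : ∀ i, x i ∈ Set.Icc (0 : ℝ) a)
    (hx_eq : ∀ i : Fin N, x i = ∑ j ∈ Finset.univ.erase i,
      ν j * ∑ k ∈ Finset.range nc, (T * x j / (1 + T * x j)) ^ k)
    (τ : ℝ) (hτ_mem : τ ∈ Set.Icc (0 : ℝ) a)
    (hτ_eq : τ = (∑ j, ν j) * ∑ k ∈ Finset.range nc, (T * τ / (1 + T * τ)) ^ k) :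
    ∀ i : Fin N, x i ≤ τ := by
  intro i
  set S := ∑ j, ν j with hSdef
  have hS0 : 0 ≤ S := Finset.sum_nonneg fun j _ => hν j
  obtain ⟨i0, -, hi0⟩ := Finset.exists_max_image Finset.univ x ⟨i, Finset.mem_univ i⟩
  have hxi : x i ≤ x i0 := hi0 i (Finset.mem_univ i)
  suffices h : x i0 ≤ τ by linarith
  by_contra hlt
  push_neg at hlt
  set M := x i0 with hMdef
  have hM0 : 0 ≤ M := (hx_mem i0).1
  have hMa : M ≤ a := (hx_mem i0).2
  have hτ0 : 0 ≤ τ := hτ_mem.1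
  have hden : ∀ t : ℝ, 0 ≤ t → (0 : ℝ) < 1 + T * t := fun t ht => by nlinarith
  have hαnn : ∀ t : ℝ, 0 ≤ t → 0 ≤ T * t / (1 + T * t) := fun t ht =>
    div_nonneg (by positivity) (hden t ht).le
  have hαmono : ∀ u v : ℝ, 0 ≤ u → u ≤ v →
      T * u / (1 + T * u) ≤ T * v / (1 + T * v) := by
    intro u v hu huv
    rw [div_le_div_iff₀ (hden u hu) (hden v (hu.trans huv))]
    nlinarith
  obtain ⟨hα1, hα2⟩ := hαmax
  have hαM : T * M / (1 + T * M) ≤ αmax := by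
    rw [div_le_iff₀ (hden M hM0)]
    have hta : M ≤ αmax / (T * (1 - αmax)) := ha ▸ hMa
    have hTpos : 0 < T * (1 - αmax) := by nlinarith
    rw [le_div_iff₀ hTpos] at hta
    nlinarith
  have hf_nonneg : ∀ t : ℝ, 0 ≤ t →
      0 ≤ ∑ k ∈ Finset.range nc, (T * t / (1 + T * t)) ^ k := fun t ht =>
    Finset.sum_nonneg fun k _ => pow_nonneg (hαnn t ht) k
  -- Step 1 : M ≤ S * f(M)
  have hstep1 : M ≤ S * ∑ k ∈ Finset.range nc, (T * M / (1 + T * M)) ^ k := by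
    calc M = ∑ j ∈ Finset.univ.erase i0,
            ν j * ∑ k ∈ Finset.range nc, (T * x j / (1 + T * x j)) ^ k := hx_eq i0
      _ ≤ ∑ j ∈ Finset.univ.erase i0,
            ν j * ∑ k ∈ Finset.range nc, (T * M / (1 + T * M)) ^ k := by
          apply Finset.sum_le_sum
          intro j _
          refine mul_le_mul_of_nonneg_left ?_ (hν j)
          apply Finset.sum_le_sum
          intro k _
          exact pow_le_pow_left₀ (hαnn _ (hx_mem j).1)
            (hαmono _ _ (hx_mem j).1 (hi0 j (Finset.mem_univ j))) k
      _ ≤ ∑ j, ν j * ∑ k ∈ Finset.range nc, (T * M / (1 + T * M)) ^ k := by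
          apply Finset.sum_le_sum_of_subset_of_nonneg (Finset.erase_subset _ _)
          intro j _ _
          exact mul_nonneg (hν j) (hf_nonneg M hM0)
      _ = S * ∑ k ∈ Finset.range nc, (T * M / (1 + T * M)) ^ k := by
          rw [← Finset.sum_mul]
  -- notation
  set L : ℝ := ∑ k ∈ Finset.range nc, (k : ℝ) * αmax ^ (k - 1) with hLdef
  have hL0 : 0 ≤ L :=
    Finset.sum_nonneg fun k _ => mul_nonneg (Nat.cast_nonneg k) (pow_nonneg hα1.le _)
  have hSTL : S * (T * L) < 1 := by
    rcases hL0.eq_or_lt with hLz | hLp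
    · rw [← hLz]; simpa using one_pos
    · have h1 : S < 1 / (T * L) := lt_of_lt_of_le hS (min_le_right _ _)
      have hTL : 0 < T * L := mul_pos hT hLp
      rw [lt_div_iff₀ hTL] at h1
      exact h1
  have hαleq : T * τ / (1 + T * τ) ≤ T * M / (1 + T * M) := hαmono τ M hτ0 hlt.le
  -- α(M) - α(τ) ≤ T * (M - τ)
  have hdiff : T * M / (1 + T * M) - T * τ / (1 + T * τ) ≤ T * (M - τ) := by
    rw [div_sub_div _ _ (hden M hM0).ne' (hden τ hτ0).ne',
      div_le_iff₀ (mul_pos (hden M hM0) (hden τ hτ0))]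
    nlinarith [mul_nonneg (mul_nonneg hT.le hM0) (mul_nonneg hT.le hτ0),
      mul_nonneg (mul_nonneg hT.le (sub_nonneg.2 hlt.le))
        (mul_nonneg (mul_nonneg hT.le hM0) (mul_nonneg hT.le hτ0)),
      mul_nonneg (mul_nonneg hT.le (sub_nonneg.2 hlt.le)) (mul_nonneg hT.le hM0),
      mul_nonneg (mul_nonneg hT.le (sub_nonneg.2 hlt.le)) (mul_nonneg hT.le hτ0)]
  -- f(M) - f(τ) ≤ L * (α(M) - α(τ))
  have hfdiff : (∑ k ∈ Finset.range nc, (T * M / (1 + T * M)) ^ k) -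
      (∑ k ∈ Finset.range nc, (T * τ / (1 + T * τ)) ^ k) ≤
      L * (T * M / (1 + T * M) - T * τ / (1 + T * τ)) := by
    rw [← Finset.sum_sub_distrib, hLdef, Finset.sum_mul]
    apply Finset.sum_le_sum
    intro k _
    have := pow_diff_le_aux αmax hα1.le k (T * M / (1 + T * M)) (T * τ / (1 + T * τ))
      (hαnn τ hτ0) hαleq hαM
    linarith [this]
  -- combine
  have hchain : M - τ ≤ S * (T * L) * (M - τ) := by
    have h6 : M - τ ≤ S * ((∑ k ∈ Finset.range nc, (T * M / (1 + T * M)) ^ k) -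
        (∑ k ∈ Finset.range nc, (T * τ / (1 + T * τ)) ^ k)) := by
      rw [mul_sub]; rw [hτ_eq] at *; linarith [hstep1]
    have h7 : S * ((∑ k ∈ Finset.range nc, (T * M / (1 + T * M)) ^ k) -
        (∑ k ∈ Finset.range nc, (T * τ / (1 + T * τ)) ^ k)) ≤
        S * (L * (T * (M - τ))) := by
      apply mul_le_mul_of_nonneg_left _ hS0
      calc _ ≤ L * (T * M / (1 + T * M) - T * τ / (1 + T * τ)) := hfdiff
        _ ≤ L * (T * (M - τ)) := mul_le_mul_of_nonneg_left hdiff hL0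
    calc M - τ ≤ S * (L * (T * (M - τ))) := h6.trans h7
      _ = S * (T * L) * (M - τ) := by ring
  nlinarith [mul_pos (sub_pos.2 hSTL) (sub_pos.2 hlt)]
end

section
/- Let T > 0, n_c ≥ 1 an integer, α_max ∈ (0,1), a = α_max/(T(1 − α_max)), and let B_1 = min{ a / (Σ_{k=0}^{n_c−1} α_max^k), 1 / (T · Σ_{k=1}^{n_c−1} k·α_max^{k−1}) }. For 0 < M < B_1 let τ̄(M) denote the unique solution in [0,a] of x = M · Σ_{k=0}^{n_c−1} (Tx/(1+Tx))^k. Then τ̄ is monotonically nondecreasing in M on (0, B_1): if 0 < M_1 ≤ M_2 < B_1, then τ̄(M_1) ≤ τ̄(M_2). -/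
lemma aux_pow_sub (u v c : ℝ) (hv : 0 ≤ v) (huv : v ≤ u) (huc : u ≤ c) (k : ℕ) :
    u ^ k - v ^ k ≤ (k : ℝ) * c ^ (k - 1) * (u - v) := by
  have hc : 0 ≤ c := le_trans (hv.trans huv) huc
  have hu : 0 ≤ u := hv.trans huv
  rw [← geom_sum₂_mul u v k]
  apply mul_le_mul_of_nonneg_right _ (by linarith)
  calc ∑ i ∈ Finset.range k, u ^ i * v ^ (k - 1 - i)
      ≤ ∑ _i ∈ Finset.range k, c ^ (k - 1) := by
        apply Finset.sum_le_sum
        intro i hi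
        have h1 : u ^ i * v ^ (k - 1 - i) ≤ c ^ i * c ^ (k - 1 - i) :=
          mul_le_mul (pow_le_pow_left₀ hu huc i) (pow_le_pow_left₀ hv (huv.trans huc) _)
            (pow_nonneg hv _) (pow_nonneg hc _)
        have h2 : c ^ i * c ^ (k - 1 - i) = c ^ (k - 1) := by
          rw [← pow_add]; congr 1
          have := Finset.mem_range.mp hi
          omega
        linarith [h1, h2.le]
    _ = (k : ℝ) * c ^ (k - 1) := by simp [mul_comm]

set_option maxHeartbeats 1000000 in
/-- With `a = α_max/(T(1−α_max))` and
`B₁ = min{ a/∑_{k<n_c} α_max^k , 1/(T ∑_{k<n_c} k α_max^{k−1}) }`, the unique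
scalar fixed point `τ̄(M) ∈ [0,a]` of `x = M ∑_{k<n_c} (Tx/(1+Tx))^k` is
monotonically nondecreasing in the total load `M` on `(0, B₁)`. -/
theorem stmt14 (T : ℝ) (hT : 0 < T) (nc : ℕ) (hnc : 1 ≤ nc)
    (αmax : ℝ) (hαmax : αmax ∈ Set.Ioo (0 : ℝ) 1)
    (a : ℝ) (ha : a = αmax / (T * (1 - αmax)))
    (B₁ : ℝ)
    (hB₁ : B₁ = min (a / ∑ k ∈ Finset.range nc, αmax ^ k)
      (1 / (T * ∑ k ∈ Finset.range nc, (k : ℝ) * αmax ^ (k - 1))))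
    (τbar : ℝ → ℝ)
    (hτbar : ∀ M ∈ Set.Ioo (0 : ℝ) B₁, τbar M ∈ Set.Icc (0 : ℝ) a ∧
      τbar M = M * ∑ k ∈ Finset.range nc, (T * τbar M / (1 + T * τbar M)) ^ k) :
    ∀ M₁ ∈ Set.Ioo (0 : ℝ) B₁, ∀ M₂ ∈ Set.Ioo (0 : ℝ) B₁,
      M₁ ≤ M₂ → τbar M₁ ≤ τbar M₂ := by
  obtain ⟨hα0, hα1⟩ := hαmax
  intro M₁ hM₁ M₂ hM₂ hM
  obtain ⟨⟨ht₁0, ht₁a⟩, hfix₁⟩ := hτbar M₁ hM₁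
  obtain ⟨⟨ht₂0, ht₂a⟩, hfix₂⟩ := hτbar M₂ hM₂
  by_contra hcon
  push_neg at hcon
  set t₁ := τbar M₁ with ht₁def
  set t₂ := τbar M₂ with ht₂def
  clear_value t₁ t₂
  clear hτbar ht₁def ht₂def
  set K := ∑ k ∈ Finset.range nc, (k : ℝ) * αmax ^ (k - 1) with hK
  clear_value K
  have hKnn : 0 ≤ K := by
    rw [hK]
    exact Finset.sum_nonneg fun k _ =>
      mul_nonneg (Nat.cast_nonneg k) (pow_nonneg hα0.le _)
  have hKpos : 0 < K := by
    rcases hKnn.lt_or_eq with h | h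
    · exact h
    · exfalso
      have hB : B₁ ≤ 1 / (T * K) := hB₁ ▸ min_le_right _ _
      rw [← h, mul_zero, div_zero] at hB
      exact absurd (hM₂.1.trans hM₂.2) (not_lt.mpr hB)
  have hM₂K : M₂ * (T * K) < 1 := by
    have hB : B₁ ≤ 1 / (T * K) := hB₁ ▸ min_le_right _ _
    have hTK : 0 < T * K := mul_pos hT hKpos
    have := hM₂.2.trans_le hB
    rw [lt_div_iff₀ hTK] at this
    linarith
  have hd₁ : (0:ℝ) < 1 + T * t₁ := by nlinarith
  have hd₂ : (0:ℝ) < 1 + T * t₂ := by nlinarith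
  set u := T * t₁ / (1 + T * t₁) with hu
  set v := T * t₂ / (1 + T * t₂) with hv
  clear_value u v
  have hvnn : 0 ≤ v := by
    rw [hv]
    exact div_nonneg (by nlinarith) hd₂.le
  have hvu : v ≤ u := by
    rw [hu, hv, div_le_div_iff₀ hd₂ hd₁]
    nlinarith [hcon]
  have huα : u ≤ αmax := by
    rw [hu, div_le_iff₀ hd₁]
    have ha' : t₁ ≤ αmax / (T * (1 - αmax)) := ha ▸ ht₁a
    have hTα : 0 < T * (1 - αmax) := by nlinarith
    rw [le_div_iff₀ hTα] at ha'
    nlinarith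
  have huv_le : u - v ≤ T * (t₁ - t₂) := by
    rw [hu, hv, div_sub_div _ _ (ne_of_gt hd₁) (ne_of_gt hd₂),
      div_le_iff₀ (mul_pos hd₁ hd₂)]
    have h0 : 0 ≤ T * (t₁ - t₂) := by nlinarith
    have h1 : (1:ℝ) ≤ (1 + T * t₁) * (1 + T * t₂) := by
      nlinarith [mul_nonneg (mul_nonneg (mul_nonneg hT.le hT.le) ht₁0) ht₂0,
        mul_nonneg hT.le ht₁0, mul_nonneg hT.le ht₂0]
    have h2 := mul_le_mul_of_nonneg_left h1 h0
    nlinarith [h2]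
  obtain ⟨S₁, hS₁⟩ : ∃ S, ∑ k ∈ Finset.range nc, u ^ k = S := ⟨_, rfl⟩
  obtain ⟨S₂, hS₂⟩ : ∃ S, ∑ k ∈ Finset.range nc, v ^ k = S := ⟨_, rfl⟩
  rw [hS₁] at hfix₁
  rw [hS₂] at hfix₂
  have hS₁nn : 0 ≤ S₁ := hS₁ ▸
    Finset.sum_nonneg fun k _ => pow_nonneg (hvnn.trans hvu) _
  have hsum : S₁ - S₂ ≤ K * (u - v) := by
    rw [← hS₁, ← hS₂, ← Finset.sum_sub_distrib, hK, Finset.sum_mul]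
    apply Finset.sum_le_sum
    intro k _
    have := aux_pow_sub u v αmax hvnn hvu huα k
    linarith
  have h1 : t₁ ≤ M₂ * S₁ := by
    rw [hfix₁]; exact mul_le_mul_of_nonneg_right hM hS₁nn
  have h2 : M₂ * (S₁ - S₂) ≤ M₂ * (K * (u - v)) :=
    mul_le_mul_of_nonneg_left hsum hM₂.1.le
  have hms : M₂ * (S₁ - S₂) = M₂ * S₁ - M₂ * S₂ := mul_sub _ _ _
  have key : t₁ - t₂ ≤ M₂ * (K * (u - v)) := by linarith [hfix₂]
  have h3 : K * (u - v) ≤ K * (T * (t₁ - t₂)) :=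
    mul_le_mul_of_nonneg_left huv_le hKnn
  have h4 : M₂ * (K * (u - v)) ≤ M₂ * (K * (T * (t₁ - t₂))) :=
    mul_le_mul_of_nonneg_left h3 hM₂.1.le
  have h5 : M₂ * (K * (T * (t₁ - t₂))) = M₂ * (T * K) * (t₁ - t₂) := by ring
  have h6 : M₂ * (T * K) * (t₁ - t₂) < 1 * (t₁ - t₂) :=
    mul_lt_mul_of_pos_right hM₂K (by linarith)
  linarith
end

section
/- Let T > 0, l ∈ [0,1), and let β : [0,1) → (0,∞) be antitone (nonincreasing). Define α(τ) = Tτ/(1+Tτ) and γ(τ) = l + (1−l)(1 − exp(−12τ)) for τ ≥ 0, and set u(τ) = β(α(τ))·(1 − α(τ)). Then the mean service time E(S)(τ) = (1 + u(τ)·T) / (u(τ)·(1 − γ(τ))) and the squared coefficient of variation c_S²(τ) = γ(τ) + 1/(1 + u(τ)·T)² are both monotonically nondecreasing in τ on [0,∞). -/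
/-- With `α(τ) = Tτ/(1+Tτ)`, `γ(τ) = l + (1−l)(1 − e^{−12τ})`, and
`u(τ) = β(α(τ))·(1 − α(τ))` where `β : [0,1) → (0,∞)` is antitone, both the mean
service time `E(S)(τ) = (1 + u(τ)T)/(u(τ)(1 − γ(τ)))` and the squared coefficient of
variation `c_S²(τ) = γ(τ) + 1/(1 + u(τ)T)²` are monotonically nondecreasing on `[0,∞)`. -/
theorem stmt16 (T l : ℝ) (hT : 0 < T) (hl : l ∈ Set.Ico (0 : ℝ) 1)
    (β : ℝ → ℝ)
    (hβ_pos : ∀ x ∈ Set.Ico (0 : ℝ) 1, 0 < β x)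
    (hβ_anti : AntitoneOn β (Set.Ico (0 : ℝ) 1)) :
    MonotoneOn
      (fun τ : ℝ =>
        (1 + (β (T * τ / (1 + T * τ)) * (1 - T * τ / (1 + T * τ))) * T) /
          ((β (T * τ / (1 + T * τ)) * (1 - T * τ / (1 + T * τ))) *
            (1 - (l + (1 - l) * (1 - Real.exp (-12 * τ))))))
      (Set.Ici (0 : ℝ)) ∧
    MonotoneOn
      (fun τ : ℝ =>
        (l + (1 - l) * (1 - Real.exp (-12 * τ))) +
          1 / (1 + (β (T * τ / (1 + T * τ)) * (1 - T * τ / (1 + T * τ))) * T) ^ 2)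
      (Set.Ici (0 : ℝ)) := by
  obtain ⟨hl0, hl1⟩ := hl
  have hden : ∀ τ : ℝ, 0 ≤ τ → 0 < 1 + T * τ := by
    intro τ hτ; nlinarith
  have hαmem : ∀ τ : ℝ, 0 ≤ τ → T * τ / (1 + T * τ) ∈ Set.Ico (0:ℝ) 1 := by
    intro τ hτ
    have h1 := hden τ hτ
    constructor
    · positivity
    · rw [div_lt_one h1]; nlinarith
  have hαmono : ∀ a b : ℝ, 0 ≤ a → a ≤ b →
      T * a / (1 + T * a) ≤ T * b / (1 + T * b) := by
    intro a b ha hab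
    rw [div_le_div_iff₀ (hden a ha) (hden b (ha.trans hab))]
    nlinarith
  -- u τ := β (α τ) * (1 - α τ)
  have hupos : ∀ τ : ℝ, 0 ≤ τ →
      0 < β (T * τ / (1 + T * τ)) * (1 - T * τ / (1 + T * τ)) := by
    intro τ hτ
    have hm := hαmem τ hτ
    have h1 := hβ_pos _ hm
    have h2 : T * τ / (1 + T * τ) < 1 := hm.2
    nlinarith
  have huanti : ∀ a b : ℝ, 0 ≤ a → a ≤ b →
      β (T * b / (1 + T * b)) * (1 - T * b / (1 + T * b)) ≤
      β (T * a / (1 + T * a)) * (1 - T * a / (1 + T * a)) := by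
    intro a b ha hab
    have hma := hαmem a ha
    have hmb := hαmem b (ha.trans hab)
    have hβb := hβ_pos _ hmb
    have hβle := hβ_anti hma hmb (hαmono a b ha hab)
    have h1 : 1 - T * b / (1 + T * b) ≤ 1 - T * a / (1 + T * a) := by
      linarith [hαmono a b ha hab]
    have h2 : 0 ≤ 1 - T * b / (1 + T * b) := by linarith [hmb.2]
    nlinarith
  have hexp : ∀ a b : ℝ, a ≤ b → Real.exp (-12 * b) ≤ Real.exp (-12 * a) := by
    intro a b hab
    exact Real.exp_le_exp.2 (by linarith)
  constructor
  · intro a ha b hb hab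
    simp only [Set.mem_Ici] at ha hb
    dsimp only
    set A1 := β (T * a / (1 + T * a)) * (1 - T * a / (1 + T * a)) with hA1
    set A2 := β (T * b / (1 + T * b)) * (1 - T * b / (1 + T * b)) with hA2
    have hA1pos : 0 < A1 := hupos a ha
    have hA2pos : 0 < A2 := hupos b hb
    have hAle : A2 ≤ A1 := huanti a b ha hab
    have hg1 : 1 - (l + (1 - l) * (1 - Real.exp (-12 * a)))
        = (1 - l) * Real.exp (-12 * a) := by ring
    have hg2 : 1 - (l + (1 - l) * (1 - Real.exp (-12 * b)))
        = (1 - l) * Real.exp (-12 * b) := by ring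
    have hE1 : 0 < Real.exp (-12 * a) := Real.exp_pos _
    have hE2 : 0 < Real.exp (-12 * b) := Real.exp_pos _
    have hEle : Real.exp (-12 * b) ≤ Real.exp (-12 * a) := hexp a b hab
    have h1l : 0 < 1 - l := by linarith
    rw [hg1, hg2]
    rw [div_le_div_iff₀ (mul_pos hA1pos (mul_pos h1l hE1))
      (mul_pos hA2pos (mul_pos h1l hE2))]
    have h5 : (1 + A1 * T) * A2 ≤ (1 + A2 * T) * A1 := by nlinarith
    have h6 : ((1 + A1 * T) * A2) * ((1 - l) * Real.exp (-12 * b)) ≤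
        ((1 + A2 * T) * A1) * ((1 - l) * Real.exp (-12 * a)) := by
      apply mul_le_mul h5 (by nlinarith) (by positivity)
      exact mul_nonneg (by nlinarith) hA1pos.le
    nlinarith [h6]
  · intro a ha b hb hab
    simp only [Set.mem_Ici] at ha hb
    dsimp only
    set A1 := β (T * a / (1 + T * a)) * (1 - T * a / (1 + T * a)) with hA1
    set A2 := β (T * b / (1 + T * b)) * (1 - T * b / (1 + T * b)) with hA2
    have hA1pos : 0 < A1 := hupos a ha
    have hA2pos : 0 < A2 := hupos b hb
    have hAle : A2 ≤ A1 := huanti a b ha hab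
    have hEle : Real.exp (-12 * b) ≤ Real.exp (-12 * a) := hexp a b hab
    have hγ : l + (1 - l) * (1 - Real.exp (-12 * a)) ≤
        l + (1 - l) * (1 - Real.exp (-12 * b)) := by nlinarith
    have hsq' : A2 * A2 ≤ A1 * A1 :=
      mul_le_mul hAle hAle hA2pos.le (hA2pos.le.trans hAle)
    have hsq : (1 + A2 * T) ^ 2 ≤ (1 + A1 * T) ^ 2 := by
      nlinarith [mul_le_mul_of_nonneg_right hsq' (mul_nonneg hT.le hT.le),
        mul_le_mul_of_nonneg_right hAle hT.le]
    have hsqpos : 0 < (1 + A2 * T) ^ 2 := by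
      have : 0 < 1 + A2 * T := by nlinarith
      positivity
    have hinv : 1 / (1 + A1 * T) ^ 2 ≤ 1 / (1 + A2 * T) ^ 2 :=
      one_div_le_one_div_of_le hsqpos hsq
    linarith
end

section
/- Let u > 0, γ ∈ [0,1), and T ≥ 0, and define M(z) = u(1−γ)·e^{−zT} / ( z + u(1 − γ·e^{−zT}) ) on a neighborhood of z = 0. Then M is twice differentiable at 0 with −M′(0) = (1 + uT)/(u(1−γ)) and M″(0) = T² + 2T/(u(1−γ)) + 3γT²/(1−γ) + 2(1 + uγT)²/(u(1−γ))². Consequently, the squared coefficient of variation M″(0)/(M′(0))² − 1 equals γ + (1−γ)/(1 + uT)². -/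
/-!
Write `M = f / g` with `f z = u(1−γ)e^{−zT}` and `g z = z + u(1 − γe^{−zT})`, so that
`f 0 = g 0 = u(1−γ)`. Both are affine in `e^{−zT}`, so their first two derivatives at `0` are
explicit, and the quotient rule applied twice gives `M′(0)` and `M″(0)`; the coefficient of
variation is then a rational identity in `u`, `γ`, `T`.
-/

open Filter Topology

theorem hasDerivAt_deriv_div {𝕜 : Type*} [NontriviallyNormedField 𝕜] {f g f' g' : 𝕜 → 𝕜}
    {f'' g'' x : 𝕜} (hf : ∀ᶠ z in 𝓝 x, HasDerivAt f (f' z) z)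
    (hg : ∀ᶠ z in 𝓝 x, HasDerivAt g (g' z) z) (hf' : HasDerivAt f' f'' x)
    (hg' : HasDerivAt g' g'' x) (hgx : g x ≠ 0) :
    HasDerivAt (deriv fun z => f z / g z)
      ((f'' * g x ^ 2 - 2 * f' x * g' x * g x - f x * g x * g'' + 2 * f x * g' x ^ 2) /
        g x ^ 3) x := by
  have hfx := hf.self_of_nhds
  have hgx' := hg.self_of_nhds
  have hg_ne : ∀ᶠ z in 𝓝 x, g z ≠ 0 := hgx'.continuousAt.eventually_ne hgx
  have hderiv : deriv (fun z => f z / g z) =ᶠ[𝓝 x]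
      fun z => (f' z * g z - f z * g' z) / g z ^ 2 := by
    filter_upwards [hf, hg, hg_ne] with z hfz hgz hz
    exact (hfz.div hgz hz).deriv
  have hquot :=
    ((hf'.fun_mul hgx').fun_sub (hfx.fun_mul hg')).fun_div (hgx'.fun_pow 2) (pow_ne_zero 2 hgx)
  refine (hquot.congr_deriv ?_).congr_of_eventuallyEq hderiv
  field_simp
  ring

theorem hasDerivAt_exp_neg_mul (T z : ℝ) :
    HasDerivAt (fun z => Real.exp (-z * T)) (-T * Real.exp (-z * T)) z := by
  simpa [mul_comm] using ((hasDerivAt_id z).neg.mul_const T).exp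

/-- The service-time MGF `M(z) = u(1−γ)e^{−zT}/(z + u(1 − γe^{−zT}))`
is twice differentiable at `0` with `−M′(0) = (1+uT)/(u(1−γ))` and
`M″(0) = T² + 2T/(u(1−γ)) + 3γT²/(1−γ) + 2(1+uγT)²/(u(1−γ))²`; consequently the
squared coefficient of variation `M″(0)/M′(0)² − 1` equals `γ + (1−γ)/(1+uT)²`. -/
theorem stmt19 (u γ T : ℝ) (hu : 0 < u) (hγ : γ ∈ Set.Ico (0 : ℝ) 1) (hT : 0 ≤ T)
    (M : ℝ → ℝ)
    (hM : ∀ z : ℝ, M z =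
      u * (1 - γ) * Real.exp (-z * T) / (z + u * (1 - γ * Real.exp (-z * T)))) :
    DifferentiableAt ℝ M 0 ∧ DifferentiableAt ℝ (deriv M) 0 ∧
    (-(deriv M 0) = (1 + u * T) / (u * (1 - γ))) ∧
    (deriv (deriv M) 0 =
      T ^ 2 + 2 * T / (u * (1 - γ)) + 3 * γ * T ^ 2 / (1 - γ) +
        2 * (1 + u * γ * T) ^ 2 / (u * (1 - γ)) ^ 2) ∧
    (deriv (deriv M) 0 / (deriv M 0) ^ 2 - 1 = γ + (1 - γ) / (1 + u * T) ^ 2) := by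
  have h1γ : 1 - γ ≠ 0 := by linarith [hγ.2]
  have huT : 1 + u * T ≠ 0 := by positivity
  have hexp := hasDerivAt_exp_neg_mul T
  have hnum (z : ℝ) : HasDerivAt (fun z => u * (1 - γ) * Real.exp (-z * T))
      (-T * (u * (1 - γ) * Real.exp (-z * T))) z :=
    ((hexp z).const_mul _).congr_deriv (by ring)
  have hden (z : ℝ) : HasDerivAt (fun z => z + u * (1 - γ * Real.exp (-z * T)))
      (1 + u * γ * T * Real.exp (-z * T)) z :=
    ((hasDerivAt_id z).add (((hexp z).const_mul γ).const_sub 1 |>.const_mul u)).congr_deriv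
      (by ring)
  have hnum' := (hnum 0).const_mul (-T)
  have hden' := ((hexp 0).const_mul (u * γ * T)).const_add 1
  have hden0 : (0 : ℝ) + u * (1 - γ * Real.exp (-0 * T)) ≠ 0 := by simp [hu.ne', h1γ]
  have hM' := (hnum 0).fun_div (hden 0) hden0
  have hM'' := hasDerivAt_deriv_div (.of_forall hnum) (.of_forall hden) hnum' hden' hden0
  simp only [neg_zero, zero_mul, Real.exp_zero, mul_one, zero_add] at hM' hM''
  rw [← funext hM] at hM' hM''
  have hM'0 : deriv M 0 = -((1 + u * T) / (u * (1 - γ))) := by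
    rw [hM'.deriv]; field_simp; ring
  have hM''0 : deriv (deriv M) 0 = T ^ 2 + 2 * T / (u * (1 - γ)) + 3 * γ * T ^ 2 / (1 - γ) +
      2 * (1 + u * γ * T) ^ 2 / (u * (1 - γ)) ^ 2 := by
    rw [hM''.deriv]; field_simp; ring
  refine ⟨hM'.differentiableAt, hM''.differentiableAt, by rw [hM'0, neg_neg], hM''0, ?_⟩
  rw [hM''0, hM'0]
  field_simp
  ring
end
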